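/- arXiv:2212.05577 — 7 statements merged into one kernel-verified Lean document; each statement's English description precedes it below -/
import Mathlib

section
/- Suppose M and Y are random variables taking values in finite sets 𝓜 and 𝓨, and R is a {0,1}-valued random variable with R independent of Y given M. If P(R=1 | M=m) > 0 for all m, and the J×K matrix Θ with entries Θ_{m,y} = P(M=m, Y=y, R=1) has rank J = |𝓜|, then the function ζ: 𝓜 → ℝ defined by ζ(m) = P(R=0|M=m)/P(R=1|M=m) is the unique solution of the linear system P(Y=y, R=0) = Σ_{m∈𝓜} P(M=m, Y=y, R=1) ζ(m) for all y ∈ 𝓨, and consequently the joint distribution P(M=m, Y=y) is uniquely determined by the distribution of the observed data (Y, R, M·R). -/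
/-!
Conditional independence `R ⊥ Y | M` makes the missingness odds factor out of every cell:
`P(M=m, Y=y, R=0) = P(M=m, Y=y, R=1) ζ(m)`. Summing over `m` shows that `ζ` solves the
linear system, and full row rank of `Θ` makes the solution unique. Since `Θ` and the left-hand
side are observed, two models with the same observed data have the same `ζ`, and then
`P(M=m, Y=y) = Θ_{m,y} (1 + ζ(m))` agrees as well.
-/

open Finset
open scoped Classical

noncomputable def pr {Ω : Type*} [Fintype Ω] (p : Ω → ℝ) (A : Ω → Prop) : ℝ :=
  ∑ ω, if A ω then p ω else 0

section Pr

variable {Ω : Type*} [Fintype Ω] (p : Ω → ℝ)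

lemma pr_nonneg {p : Ω → ℝ} (hp0 : ∀ ω, 0 ≤ p ω) (A : Ω → Prop) : 0 ≤ pr p A :=
  sum_nonneg fun ω _ => by split_ifs <;> simp [hp0 ω]

lemma pr_eq_pr_and_true_add_pr_and_false (A : Ω → Prop) (R : Ω → Bool) :
    pr p A = pr p (fun ω => A ω ∧ R ω = true) + pr p (fun ω => A ω ∧ R ω = false) := by
  unfold pr
  rw [← sum_add_distrib]
  refine sum_congr rfl fun ω _ => ?_
  by_cases h : A ω <;> cases hR : R ω <;> simp [h, hR]

lemma pr_eq_sum_pr_eq_and {𝓜 : Type*} [Fintype 𝓜] (M : Ω → 𝓜) (A : Ω → Prop) :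
    pr p A = ∑ m, pr p (fun ω => M ω = m ∧ A ω) := by
  unfold pr
  rw [sum_comm]
  refine sum_congr rfl fun ω _ => ?_
  by_cases h : A ω <;> simp [h]

end Pr

lemma eq_of_forall_sum_mul_eq {ι κ R : Type*} [Fintype ι] [Ring R] (Θ : ι → κ → R)
    (hΘ : ∀ v : ι → R, (∀ k, ∑ i, Θ i k * v i = 0) → v = 0) {a b : ι → R}
    (h : ∀ k, ∑ i, Θ i k * a i = ∑ i, Θ i k * b i) : a = b :=
  sub_eq_zero.mp <| hΘ (a - b) fun k => by
    simp only [Pi.sub_apply, mul_sub, sum_sub_distrib, h k, sub_self]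

section MissingOdds

variable {Ω 𝓜 𝓨 : Type*} [Fintype Ω]
  {p : Ω → ℝ} {M : Ω → 𝓜} {Y : Ω → 𝓨} {R : Ω → Bool}

/-- The paper's `ζ(m) = P(R=0 | M=m) / P(R=1 | M=m)`, written as a ratio of joint probabilities. -/
noncomputable def missingOdds (p : Ω → ℝ) (M : Ω → 𝓜) (R : Ω → Bool) (m : 𝓜) : ℝ :=
  pr p (fun ω => M ω = m ∧ R ω = false) / pr p (fun ω => M ω = m ∧ R ω = true)

lemma pr_and_false_eq_mul_missingOdds (hp0 : ∀ ω, 0 ≤ p ω)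
    (hCI : ∀ m y r,
      pr p (fun ω => M ω = m) * pr p (fun ω => M ω = m ∧ Y ω = y ∧ R ω = r) =
        pr p (fun ω => M ω = m ∧ Y ω = y) * pr p (fun ω => M ω = m ∧ R ω = r))
    (hpos : ∀ m, 0 < pr p (fun ω => M ω = m ∧ R ω = true)) (m : 𝓜) (y : 𝓨) :
    pr p (fun ω => M ω = m ∧ Y ω = y ∧ R ω = false) =
      pr p (fun ω => M ω = m ∧ Y ω = y ∧ R ω = true) * missingOdds p M R m := by
  set a₁ := pr p (fun ω => M ω = m ∧ Y ω = y ∧ R ω = true)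
  set a₀ := pr p (fun ω => M ω = m ∧ Y ω = y ∧ R ω = false)
  set b₁ := pr p (fun ω => M ω = m ∧ R ω = true)
  set b₀ := pr p (fun ω => M ω = m ∧ R ω = false)
  have hM : pr p (fun ω => M ω = m) = b₁ + b₀ := pr_eq_pr_and_true_add_pr_and_false p _ R
  have hb₁ : 0 < b₁ := hpos m
  have hM_pos : 0 < b₁ + b₀ := add_pos_of_pos_of_nonneg hb₁ (pr_nonneg hp0 _)
  have h₁ := hCI m y true
  have h₀ := hCI m y false
  rw [hM] at h₁ h₀
  -- eliminating `P(M=m, Y=y)` between the two instances of conditional independence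
  have hcross : a₀ * b₁ = a₁ * b₀ := by
    refine mul_left_cancel₀ hM_pos.ne' ?_
    linear_combination b₁ * h₀ - b₀ * h₁
  rw [missingOdds, mul_div_assoc', eq_div_iff hb₁.ne', hcross]

lemma pr_and_false_eq_sum_mul_missingOdds [Fintype 𝓜] (hp0 : ∀ ω, 0 ≤ p ω)
    (hCI : ∀ m y r,
      pr p (fun ω => M ω = m) * pr p (fun ω => M ω = m ∧ Y ω = y ∧ R ω = r) =
        pr p (fun ω => M ω = m ∧ Y ω = y) * pr p (fun ω => M ω = m ∧ R ω = r))
    (hpos : ∀ m, 0 < pr p (fun ω => M ω = m ∧ R ω = true)) (y : 𝓨) :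
    pr p (fun ω => Y ω = y ∧ R ω = false) =
      ∑ m, pr p (fun ω => M ω = m ∧ Y ω = y ∧ R ω = true) * missingOdds p M R m := by
  rw [pr_eq_sum_pr_eq_and p M]
  exact sum_congr rfl fun m _ => pr_and_false_eq_mul_missingOdds hp0 hCI hpos m y

lemma pr_eq_mul_one_add_missingOdds (hp0 : ∀ ω, 0 ≤ p ω)
    (hCI : ∀ m y r,
      pr p (fun ω => M ω = m) * pr p (fun ω => M ω = m ∧ Y ω = y ∧ R ω = r) =
        pr p (fun ω => M ω = m ∧ Y ω = y) * pr p (fun ω => M ω = m ∧ R ω = r))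
    (hpos : ∀ m, 0 < pr p (fun ω => M ω = m ∧ R ω = true)) (m : 𝓜) (y : 𝓨) :
    pr p (fun ω => M ω = m ∧ Y ω = y) =
      pr p (fun ω => M ω = m ∧ Y ω = y ∧ R ω = true) * (1 + missingOdds p M R m) := by
  rw [pr_eq_pr_and_true_add_pr_and_false p _ R]
  simp only [and_assoc]
  rw [pr_and_false_eq_mul_missingOdds hp0 hCI hpos, mul_one_add]

end MissingOdds

theorem mediator_mnar_identification_general
    {Ω Ω' 𝓜 𝓨 : Type*} [Fintype Ω] [Fintype Ω'] [Fintype 𝓜] [Fintype 𝓨]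
    (p : Ω → ℝ) (hp0 : ∀ ω, 0 ≤ p ω)
    (M : Ω → 𝓜) (Y : Ω → 𝓨) (R : Ω → Bool)
    -- conditional independence  R ⊥ Y | M
    (hCI : ∀ m y r,
      pr p (fun ω => M ω = m) * pr p (fun ω => M ω = m ∧ Y ω = y ∧ R ω = r) =
        pr p (fun ω => M ω = m ∧ Y ω = y) * pr p (fun ω => M ω = m ∧ R ω = r))
    -- positivity:  P(R=1, M=m) > 0 for every m
    (hpos : ∀ m, 0 < pr p (fun ω => M ω = m ∧ R ω = true))
    -- the J × K matrix Θ has full row rank J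
    (hrank : ∀ v : 𝓜 → ℝ,
      (∀ y, ∑ m, pr p (fun ω => M ω = m ∧ Y ω = y ∧ R ω = true) * v m = 0) → v = 0)
    -- a second model satisfying the same assumptions
    (q : Ω' → ℝ) (hq0 : ∀ ω, 0 ≤ q ω)
    (M' : Ω' → 𝓜) (Y' : Ω' → 𝓨) (R' : Ω' → Bool)
    (hCI' : ∀ m y r,
      pr q (fun ω => M' ω = m) * pr q (fun ω => M' ω = m ∧ Y' ω = y ∧ R' ω = r) =
        pr q (fun ω => M' ω = m ∧ Y' ω = y) * pr q (fun ω => M' ω = m ∧ R' ω = r))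
    (hpos' : ∀ m, 0 < pr q (fun ω => M' ω = m ∧ R' ω = true))
    -- with the same observed-data distribution
    (hobs1 : ∀ m y, pr p (fun ω => M ω = m ∧ Y ω = y ∧ R ω = true) =
        pr q (fun ω => M' ω = m ∧ Y' ω = y ∧ R' ω = true))
    (hobs0 : ∀ y, pr p (fun ω => Y ω = y ∧ R ω = false) =
        pr q (fun ω => Y' ω = y ∧ R' ω = false)) :
    -- ζ solves the linear system
    ((∀ y, pr p (fun ω => Y ω = y ∧ R ω = false) =
        ∑ m, pr p (fun ω => M ω = m ∧ Y ω = y ∧ R ω = true) *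
          (pr p (fun ω => M ω = m ∧ R ω = false) /
            pr p (fun ω => M ω = m ∧ R ω = true))) ∧
      -- and is its unique solution
      (∀ ζ' : 𝓜 → ℝ,
        (∀ y, pr p (fun ω => Y ω = y ∧ R ω = false) =
          ∑ m, pr p (fun ω => M ω = m ∧ Y ω = y ∧ R ω = true) * ζ' m) →
        ζ' = fun m =>
          pr p (fun ω => M ω = m ∧ R ω = false) /
            pr p (fun ω => M ω = m ∧ R ω = true))) ∧
    -- consequently the joint distribution of (M, Y) is identified
    (∀ m y, pr p (fun ω => M ω = m ∧ Y ω = y) =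
        pr q (fun ω => M' ω = m ∧ Y' ω = y)) := by
  have hsolve := pr_and_false_eq_sum_mul_missingOdds hp0 hCI hpos
  have huniq : ∀ ζ' : 𝓜 → ℝ,
      (∀ y, pr p (fun ω => Y ω = y ∧ R ω = false) =
        ∑ m, pr p (fun ω => M ω = m ∧ Y ω = y ∧ R ω = true) * ζ' m) →
      ζ' = missingOdds p M R := fun ζ' hζ' =>
    eq_of_forall_sum_mul_eq _ hrank fun y => (hζ' y).symm.trans (hsolve y)
  refine ⟨⟨hsolve, huniq⟩, fun m y => ?_⟩
  have hodds : missingOdds q M' R' = missingOdds p M R := huniq _ fun y => by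
    rw [hobs0, pr_and_false_eq_sum_mul_missingOdds hq0 hCI' hpos']
    simp only [hobs1]
  rw [pr_eq_mul_one_add_missingOdds hp0 hCI hpos, pr_eq_mul_one_add_missingOdds hq0 hCI' hpos',
    hobs1, hodds]

/-- Theorem 1 (discrete case).  Suppose `M`, `Y` take values in finite sets and
`R` is a missingness indicator for `M` with `R ⊥ Y | M`.  If `P(R=1 | M=m) > 0`
for all `m` and the matrix `Θ` with entries `Θ_{m,y} = P(M=m, Y=y, R=1)` has full
row rank, then `ζ(m) = P(R=0|M=m)/P(R=1|M=m)` is the unique solution of the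
linear system `P(Y=y, R=0) = ∑_m P(M=m, Y=y, R=1) ζ(m)`, and consequently the
joint distribution `P(M=m, Y=y)` is uniquely determined by the observed-data
distribution. -/
theorem mediator_mnar_identification
    {Ω Ω' 𝓜 𝓨 : Type*} [Fintype Ω] [Fintype Ω'] [Fintype 𝓜] [Fintype 𝓨]
    (p : Ω → ℝ) (hp0 : ∀ ω, 0 ≤ p ω) (hp1 : ∑ ω, p ω = 1)
    (M : Ω → 𝓜) (Y : Ω → 𝓨) (R : Ω → Bool)
    -- conditional independence  R ⊥ Y | M
    (hCI : ∀ m y r,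
      pr p (fun ω => M ω = m) * pr p (fun ω => M ω = m ∧ Y ω = y ∧ R ω = r) =
        pr p (fun ω => M ω = m ∧ Y ω = y) * pr p (fun ω => M ω = m ∧ R ω = r))
    -- positivity:  P(R=1, M=m) > 0 for every m
    (hpos : ∀ m, 0 < pr p (fun ω => M ω = m ∧ R ω = true))
    -- the J × K matrix Θ has full row rank J
    (hrank : ∀ v : 𝓜 → ℝ,
      (∀ y, ∑ m, pr p (fun ω => M ω = m ∧ Y ω = y ∧ R ω = true) * v m = 0) → v = 0)
    -- a second model satisfying the same assumptions
    (q : Ω' → ℝ) (hq0 : ∀ ω, 0 ≤ q ω) (hq1 : ∑ ω, q ω = 1)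
    (M' : Ω' → 𝓜) (Y' : Ω' → 𝓨) (R' : Ω' → Bool)
    (hCI' : ∀ m y r,
      pr q (fun ω => M' ω = m) * pr q (fun ω => M' ω = m ∧ Y' ω = y ∧ R' ω = r) =
        pr q (fun ω => M' ω = m ∧ Y' ω = y) * pr q (fun ω => M' ω = m ∧ R' ω = r))
    (hpos' : ∀ m, 0 < pr q (fun ω => M' ω = m ∧ R' ω = true))
    -- with the same observed-data distribution
    (hobs1 : ∀ m y, pr p (fun ω => M ω = m ∧ Y ω = y ∧ R ω = true) =
        pr q (fun ω => M' ω = m ∧ Y' ω = y ∧ R' ω = true))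
    (hobs0 : ∀ y, pr p (fun ω => Y ω = y ∧ R ω = false) =
        pr q (fun ω => Y' ω = y ∧ R' ω = false)) :
    -- ζ solves the linear system
    ((∀ y, pr p (fun ω => Y ω = y ∧ R ω = false) =
        ∑ m, pr p (fun ω => M ω = m ∧ Y ω = y ∧ R ω = true) *
          (pr p (fun ω => M ω = m ∧ R ω = false) /
            pr p (fun ω => M ω = m ∧ R ω = true))) ∧
      -- and is its unique solution
      (∀ ζ' : 𝓜 → ℝ,
        (∀ y, pr p (fun ω => Y ω = y ∧ R ω = false) =
          ∑ m, pr p (fun ω => M ω = m ∧ Y ω = y ∧ R ω = true) * ζ' m) →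
        ζ' = fun m =>
          pr p (fun ω => M ω = m ∧ R ω = false) /
            pr p (fun ω => M ω = m ∧ R ω = true))) ∧
    -- consequently the joint distribution of (M, Y) is identified
    (∀ m y, pr p (fun ω => M ω = m ∧ Y ω = y) =
        pr q (fun ω => M' ω = m ∧ Y' ω = y)) :=
  mediator_mnar_identification_general p hp0 M Y R hCI hpos hrank q hq0 M' Y' R' hCI' hpos' hobs1
    hobs0
end

section
/- Let M be a binary random variable, Y a finite-valued random variable, and R a {0,1}-valued random variable with R independent of Y given M and P(R=1|M=m) > 0 for m ∈ {0,1}. If M and Y are not independent, then the matrix with rows (P(M=m, Y=y, R=1))_{y ∈ 𝓨} for m ∈ {0,1} has rank 2. -/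
open Finset
open scoped Classical

/-!
By `R ⊥ Y | M`, the row `m` of the matrix is `P(R=1 | M=m) > 0` times the row
`q_m = (P(M=m, Y=y))_y`, so it suffices that `q_1` and `q_0` are linearly independent.
Summing a relation `s q_1 + t q_0 = 0` over `y` gives `s P(M=1) + t P(M=0) = 0`, and if
`s ≠ 0` the two relations together force `q_1 P(M=0) = q_0 P(M=1)`, which (using
`P(M=0) + P(M=1) = 1`) is exactly the independence of `M` and `Y`.
-/

theorem eq_zero_of_forall_mul_add_mul_eq_zero {ι K : Type*} [Fintype ι] [CommRing K]
    [NoZeroDivisors K] {u v : ι → K} (hv : ∑ i, v i ≠ 0)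
    (huv : ∃ i, u i * ∑ j, v j ≠ v i * ∑ j, u j) {s t : K}
    (h : ∀ i, s * u i + t * v i = 0) : s = 0 ∧ t = 0 := by
  have hsum : s * ∑ j, u j + t * ∑ j, v j = 0 := by
    simp only [mul_sum, ← sum_add_distrib, h, sum_const_zero]
  obtain ⟨i, hi⟩ := huv
  have hs : s = 0 := by
    have : s * (u i * ∑ j, v j - v i * ∑ j, u j) = 0 := by
      linear_combination (∑ j, v j) * h i - v i * hsum
    exact (mul_eq_zero.mp this).resolve_right (sub_ne_zero.mpr hi)
  refine ⟨hs, (mul_eq_zero.mp ?_).resolve_right hv⟩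
  simpa [hs] using hsum

section Probability

variable {Ω : Type*} [Fintype Ω] (p : Ω → ℝ)

theorem pr_eq_pr_true_and_add_pr_false_and (B : Ω → Bool) (A : Ω → Prop) :
    pr p A = pr p (fun ω => B ω = true ∧ A ω) + pr p (fun ω => B ω = false ∧ A ω) := by
  unfold pr
  rw [← sum_add_distrib]
  refine sum_congr rfl fun ω _ => ?_
  cases hB : B ω <;> by_cases hA : A ω <;> simp [hA, hB]

theorem sum_pr_and_eq {𝓨 : Type*} [Fintype 𝓨] (A : Ω → Prop) (Y : Ω → 𝓨) :
    ∑ y, pr p (fun ω => A ω ∧ Y ω = y) = pr p A := by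
  unfold pr
  rw [sum_comm]
  refine sum_congr rfl fun ω _ => ?_
  by_cases h : A ω <;> simp [h]

theorem pr_true_add_pr_false (hp1 : ∑ ω, p ω = 1) (M : Ω → Bool) :
    pr p (fun ω => M ω = true) + pr p (fun ω => M ω = false) = 1 := by
  have h := pr_eq_pr_true_and_add_pr_false_and p M (fun _ => True)
  simp only [and_true] at h
  rw [← h, ← hp1]
  simp [pr]

theorem pr_and_eq_mul_of_forall_mul_eq_mul {𝓨 : Type*} [Fintype 𝓨] (hp1 : ∑ ω, p ω = 1)
    (M : Ω → Bool) (Y : Ω → 𝓨)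
    (hprop : ∀ y, pr p (fun ω => M ω = true ∧ Y ω = y) * pr p (fun ω => M ω = false) =
      pr p (fun ω => M ω = false ∧ Y ω = y) * pr p (fun ω => M ω = true)) (m : Bool) (y : 𝓨) :
    pr p (fun ω => M ω = m ∧ Y ω = y) = pr p (fun ω => M ω = m) * pr p (fun ω => Y ω = y) := by
  rw [pr_eq_pr_true_and_add_pr_false_and p M (fun ω => Y ω = y)]
  have hM := pr_true_add_pr_false p hp1 M
  cases m
  · linear_combination -hprop y - pr p (fun ω => M ω = false ∧ Y ω = y) * hM
  · linear_combination hprop y - pr p (fun ω => M ω = true ∧ Y ω = y) * hM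

end Probability

theorem binary_mediator_rank_two_general
    {Ω 𝓨 : Type*} [Fintype Ω] [Fintype 𝓨]
    (p : Ω → ℝ) (hp1 : ∑ ω, p ω = 1)
    (M : Ω → Bool) (Y : Ω → 𝓨) (R : Ω → Bool)
    -- conditional independence  R ⊥ Y | M
    (hCI : ∀ m y r,
      pr p (fun ω => M ω = m) * pr p (fun ω => M ω = m ∧ Y ω = y ∧ R ω = r) =
        pr p (fun ω => M ω = m ∧ Y ω = y) * pr p (fun ω => M ω = m ∧ R ω = r))
    -- positivity of the marginal of M and of P(R=1, M=m)
    (hMpos : ∀ m, 0 < pr p (fun ω => M ω = m))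
    (hRpos : ∀ m, 0 < pr p (fun ω => M ω = m ∧ R ω = true))
    -- M and Y are not independent
    (hdep : ∃ m y, pr p (fun ω => M ω = m ∧ Y ω = y) ≠
        pr p (fun ω => M ω = m) * pr p (fun ω => Y ω = y)) :
    ∀ a b : ℝ,
      (∀ y, a * pr p (fun ω => M ω = true ∧ Y ω = y ∧ R ω = true) +
          b * pr p (fun ω => M ω = false ∧ Y ω = y ∧ R ω = true) = 0) →
      a = 0 ∧ b = 0 := by
  intro a b hab
  set c : Bool → ℝ := fun m => pr p (fun ω => M ω = m ∧ R ω = true) / pr p (fun ω => M ω = m)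
  have hc : ∀ m, c m ≠ 0 := fun m => (div_pos (hRpos m) (hMpos m)).ne'
  have hrow : ∀ m y, pr p (fun ω => M ω = m ∧ Y ω = y ∧ R ω = true) =
      c m * pr p (fun ω => M ω = m ∧ Y ω = y) := fun m y => by
    rw [div_mul_eq_mul_div, eq_div_iff (hMpos m).ne', mul_comm, hCI, mul_comm]
  obtain ⟨hac, hbc⟩ := eq_zero_of_forall_mul_add_mul_eq_zero (s := a * c true) (t := b * c false)
    (u := fun y => pr p (fun ω => M ω = true ∧ Y ω = y))
    (v := fun y => pr p (fun ω => M ω = false ∧ Y ω = y))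
    (by simpa only [sum_pr_and_eq] using (hMpos false).ne')
    (by
      by_contra! hprop
      simp only [sum_pr_and_eq] at hprop
      obtain ⟨m, y, hmy⟩ := hdep
      exact hmy (pr_and_eq_mul_of_forall_mul_eq_mul p hp1 M Y hprop m y))
    (fun y => by linear_combination hab y - a * hrow true y - b * hrow false y)
  exact ⟨(mul_eq_zero.mp hac).resolve_right (hc true), (mul_eq_zero.mp hbc).resolve_right (hc false)⟩

/-- For binary `M`, finite-valued `Y`, and a missingness indicator `R` with
`R ⊥ Y | M` and `P(R=1 | M=m) > 0`: if `M` and `Y` are not independent, then the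
matrix with rows `(P(M=m, Y=y, R=1))_{y}` for `m ∈ {0,1}` has rank 2, i.e. its
two rows are linearly independent. -/
theorem binary_mediator_rank_two
    {Ω 𝓨 : Type*} [Fintype Ω] [Fintype 𝓨]
    (p : Ω → ℝ) (hp0 : ∀ ω, 0 ≤ p ω) (hp1 : ∑ ω, p ω = 1)
    (M : Ω → Bool) (Y : Ω → 𝓨) (R : Ω → Bool)
    -- conditional independence  R ⊥ Y | M
    (hCI : ∀ m y r,
      pr p (fun ω => M ω = m) * pr p (fun ω => M ω = m ∧ Y ω = y ∧ R ω = r) =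
        pr p (fun ω => M ω = m ∧ Y ω = y) * pr p (fun ω => M ω = m ∧ R ω = r))
    -- positivity of the marginal of M and of P(R=1, M=m)
    (hMpos : ∀ m, 0 < pr p (fun ω => M ω = m))
    (hRpos : ∀ m, 0 < pr p (fun ω => M ω = m ∧ R ω = true))
    -- M and Y are not independent
    (hdep : ∃ m y, pr p (fun ω => M ω = m ∧ Y ω = y) ≠
        pr p (fun ω => M ω = m) * pr p (fun ω => Y ω = y)) :
    ∀ a b : ℝ,
      (∀ y, a * pr p (fun ω => M ω = true ∧ Y ω = y ∧ R ω = true) +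
          b * pr p (fun ω => M ω = false ∧ Y ω = y ∧ R ω = true) = 0) →
      a = 0 ∧ b = 0 :=
  binary_mediator_rank_two_general p hp1 M Y R hCI hMpos hRpos hdep
end

section
/- Suppose M, Y are finite-valued random variables and R^M, R^Y are {0,1}-valued with (R^Y, R^M) jointly independent of Y given M, and R^Y independent of M given R^M. If P(R^M=1, R^Y=1 | M=m) > 0 and P(R^M=0, R^Y=1 | M=m) > 0 for all m, and the matrix Θ with entries Θ_{m,y} = P(M=m, Y=y, R^M=1, R^Y=1) has full row rank |𝓜|, then P(M=m, Y=y) is uniquely determined for all m,y by the observed-data distribution, namely the quantities P(M=m, Y=y, R^M=1, R^Y=1), P(Y=y, R^M=0, R^Y=1), P(R^Y=1 | R^M=r) for r ∈ {0,1}. -/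
open Finset
open scoped Classical

lemma pr_congr {Ω : Type*} [Fintype Ω] (p : Ω → ℝ) {A B : Ω → Prop}
    (h : ∀ ω, A ω ↔ B ω) : pr p A = pr p B := by
  unfold pr; apply Finset.sum_congr rfl; intro ω _; simp [h ω]

lemma pr_mono {Ω : Type*} [Fintype Ω] {p : Ω → ℝ} (hp0 : ∀ ω, 0 ≤ p ω)
    {A B : Ω → Prop} (h : ∀ ω, A ω → B ω) : pr p A ≤ pr p B := by
  unfold pr; apply Finset.sum_le_sum; intro ω _
  by_cases hA : A ω
  · simp [hA, h ω hA]
  · simp only [hA, if_false]; split <;> simp [hp0 ω]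

lemma pr_fiber {Ω α : Type*} [Fintype Ω] [Fintype α] (p : Ω → ℝ) (f : Ω → α)
    (A : Ω → Prop) : ∑ a, pr p (fun ω => A ω ∧ f ω = a) = pr p A := by
  unfold pr
  rw [Finset.sum_comm]
  apply Finset.sum_congr rfl; intro ω _
  by_cases hA : A ω
  · simp [hA, Finset.sum_ite_eq univ (f ω)]
  · simp [hA]

lemma pr_split_bool {Ω : Type*} [Fintype Ω] (p : Ω → ℝ) (A : Ω → Prop)
    (R : Ω → Bool) :
    pr p A = pr p (fun ω => A ω ∧ R ω = true) + pr p (fun ω => A ω ∧ R ω = false) := by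
  rw [← pr_fiber p R A, Fintype.sum_bool]

lemma alg_cancel (PM A A0 J C D : ℝ) (hPM : 0 < PM)
    (e1 : PM * A = J * C) (e2 : PM * A0 = J * D) : A0 * C = A * D := by
  have h : PM * (A0 * C) = PM * (A * D) := by linear_combination C * e2 - D * e1
  exact mul_left_cancel₀ hPM.ne' h

lemma alg_term (A Aq A0p A0q Dp Dq Cp Cq : ℝ)
    (h1 : A0p * Cp = A * Dp) (h2 : A0q * Cq = Aq * Dq) (hA : A = Aq)
    (hCp : 0 < Cp) (hCq : 0 < Cq) :
    A * (Dp / Cp - Dq / Cq) = A0p - A0q := by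
  field_simp
  linear_combination -Cq * h1 + Cp * h2 - Dq * Cp * hA

lemma alg_HG (Dp Dq Cp Cq Gp Gq Hp Hq P0 P1 E0 E1 : ℝ)
    (a1 : P0 * Dp = Hp * E0) (a3 : P0 * Dq = Hq * E0)
    (a4 : P1 * Cp = Gp * E1) (a2 : P1 * Cq = Gq * E1)
    (a5 : Dp * Cq = Dq * Cp) (hE0 : 0 < E0) (hE1 : 0 < E1) :
    Hp * Gq = Hq * Gp := by
  have h : (Hp * Gq) * (E0 * E1) = (Hq * Gp) * (E0 * E1) := by
    linear_combination (-(Gq*E1)) * a1 + (-(P0*Dp)) * a2 + (P0*P1) * a5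
      + (P1*Cp) * a3 + (Hq*E0) * a4
  exact mul_right_cancel₀ (by positivity) h

lemma alg_final (Jp Jq A Aq PMp PMq Cp Cq Gp Gq Hp Hq P1 E1 : ℝ)
    (eJp : PMp * A = Jp * Cp) (eJq : PMq * Aq = Jq * Cq) (hA : A = Aq)
    (a4 : P1 * Cp = Gp * E1) (a2 : P1 * Cq = Gq * E1)
    (ePMp : PMp = Gp + Hp) (ePMq : PMq = Gq + Hq)
    (hHG : Hp * Gq = Hq * Gp)
    (hGp : 0 < Gp) (hGq : 0 < Gq) (hE1 : 0 < E1) : Jp = Jq := by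
  have h : Jp * (Gp * Gq * E1) = Jq * (Gp * Gq * E1) := by
    linear_combination (-(Jp*Gq)) * a4 + (-(P1*Gq)) * eJp + (P1*A*Gq) * ePMp
      + (-(P1*A*Gp)) * ePMq + (P1*A) * hHG + (P1*Gp*PMq) * hA
      + (P1*Gp) * eJq + (Jq*Gp) * a2
  exact mul_right_cancel₀ (by positivity) h

/-- Theorem 2(i) (discrete case).  With `(R^Y, R^M) ⊥ Y | M` and `R^Y ⊥ M | R^M`,
positivity `P(R^M=1, R^Y=1 | M=m) > 0` and `P(R^M=0, R^Y=1 | M=m) > 0`, and the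
matrix `Θ_{m,y} = P(M=m, Y=y, R^M=1, R^Y=1)` of full row rank, the joint
distribution `P(M=m, Y=y)` is uniquely determined by the observed-data
distribution, namely `P(M=m, Y=y, R^M=1, R^Y=1)`, `P(Y=y, R^M=0, R^Y=1)` and
`P(R^Y=1 | R^M=r)`. -/
theorem mediator_outcome_mnar_identification
    {Ω Ω' 𝓜 𝓨 : Type*} [Fintype Ω] [Fintype Ω'] [Fintype 𝓜] [Fintype 𝓨]
    (p : Ω → ℝ) (hp0 : ∀ ω, 0 ≤ p ω) (hp1 : ∑ ω, p ω = 1)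
    (M : Ω → 𝓜) (Y : Ω → 𝓨) (RM RY : Ω → Bool)
    -- conditional independence  (R^Y, R^M) ⊥ Y | M
    (hCI1 : ∀ m y r s,
      pr p (fun ω => M ω = m) *
          pr p (fun ω => M ω = m ∧ Y ω = y ∧ RM ω = r ∧ RY ω = s) =
        pr p (fun ω => M ω = m ∧ Y ω = y) *
          pr p (fun ω => M ω = m ∧ RM ω = r ∧ RY ω = s))
    -- conditional independence  R^Y ⊥ M | R^M
    (hCI2 : ∀ m r s,
      pr p (fun ω => RM ω = r) * pr p (fun ω => RM ω = r ∧ RY ω = s ∧ M ω = m) =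
        pr p (fun ω => RM ω = r ∧ M ω = m) * pr p (fun ω => RM ω = r ∧ RY ω = s))
    -- positivity
    (hpos11 : ∀ m, 0 < pr p (fun ω => M ω = m ∧ RM ω = true ∧ RY ω = true))
    (hpos01 : ∀ m, 0 < pr p (fun ω => M ω = m ∧ RM ω = false ∧ RY ω = true))
    -- full row rank of Θ
    (hrank : ∀ v : 𝓜 → ℝ,
      (∀ y, ∑ m,
        pr p (fun ω => M ω = m ∧ Y ω = y ∧ RM ω = true ∧ RY ω = true) * v m = 0) →
      v = 0)
    -- a second model satisfying the same assumptions
    (q : Ω' → ℝ) (hq0 : ∀ ω, 0 ≤ q ω) (hq1 : ∑ ω, q ω = 1)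
    (M' : Ω' → 𝓜) (Y' : Ω' → 𝓨) (RM' RY' : Ω' → Bool)
    (hCI1' : ∀ m y r s,
      pr q (fun ω => M' ω = m) *
          pr q (fun ω => M' ω = m ∧ Y' ω = y ∧ RM' ω = r ∧ RY' ω = s) =
        pr q (fun ω => M' ω = m ∧ Y' ω = y) *
          pr q (fun ω => M' ω = m ∧ RM' ω = r ∧ RY' ω = s))
    (hCI2' : ∀ m r s,
      pr q (fun ω => RM' ω = r) *
          pr q (fun ω => RM' ω = r ∧ RY' ω = s ∧ M' ω = m) =
        pr q (fun ω => RM' ω = r ∧ M' ω = m) *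
          pr q (fun ω => RM' ω = r ∧ RY' ω = s))
    (hpos11' : ∀ m, 0 < pr q (fun ω => M' ω = m ∧ RM' ω = true ∧ RY' ω = true))
    (hpos01' : ∀ m, 0 < pr q (fun ω => M' ω = m ∧ RM' ω = false ∧ RY' ω = true))
    -- with the same observed-data distribution
    (hobs1 : ∀ m y,
      pr p (fun ω => M ω = m ∧ Y ω = y ∧ RM ω = true ∧ RY ω = true) =
        pr q (fun ω => M' ω = m ∧ Y' ω = y ∧ RM' ω = true ∧ RY' ω = true))
    (hobs2 : ∀ y,
      pr p (fun ω => Y ω = y ∧ RM ω = false ∧ RY ω = true) =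
        pr q (fun ω => Y' ω = y ∧ RM' ω = false ∧ RY' ω = true))
    (hobs3 : ∀ r s,
      pr p (fun ω => RM ω = r ∧ RY ω = s) =
        pr q (fun ω => RM' ω = r ∧ RY' ω = s)) :
    -- the joint distribution of (M, Y) is identified
    ∀ m y, pr p (fun ω => M ω = m ∧ Y ω = y) =
        pr q (fun ω => M' ω = m ∧ Y' ω = y) := by
  -- shared observed quantities
  have hE1eq : pr p (fun ω => RM ω = true ∧ RY ω = true) =
      pr q (fun ω => RM' ω = true ∧ RY' ω = true) := hobs3 true true
  have hE0eq : pr p (fun ω => RM ω = false ∧ RY ω = true) =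
      pr q (fun ω => RM' ω = false ∧ RY' ω = true) := hobs3 false true
  have hP1 : pr p (fun ω => RM ω = true) = pr q (fun ω => RM' ω = true) := by
    have h1 : pr p (fun ω => RM ω = true) =
        pr p (fun ω => RM ω = true ∧ RY ω = true) +
          pr p (fun ω => RM ω = true ∧ RY ω = false) :=
      pr_split_bool p _ RY
    have h2 : pr q (fun ω => RM' ω = true) =
        pr q (fun ω => RM' ω = true ∧ RY' ω = true) +
          pr q (fun ω => RM' ω = true ∧ RY' ω = false) :=
      pr_split_bool q _ RY'
    rw [h1, h2, hobs3 true true, hobs3 true false]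
  have hP0 : pr p (fun ω => RM ω = false) = pr q (fun ω => RM' ω = false) := by
    have h1 : pr p (fun ω => RM ω = false) =
        pr p (fun ω => RM ω = false ∧ RY ω = true) +
          pr p (fun ω => RM ω = false ∧ RY ω = false) :=
      pr_split_bool p _ RY
    have h2 : pr q (fun ω => RM' ω = false) =
        pr q (fun ω => RM' ω = false ∧ RY' ω = true) +
          pr q (fun ω => RM' ω = false ∧ RY' ω = false) :=
      pr_split_bool q _ RY'
    rw [h1, h2, hobs3 false true, hobs3 false false]
  -- key per-model identity: A0 * C = A * D
  have key_p : ∀ m y,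
      pr p (fun ω => M ω = m ∧ Y ω = y ∧ RM ω = false ∧ RY ω = true) *
        pr p (fun ω => M ω = m ∧ RM ω = true ∧ RY ω = true) =
      pr p (fun ω => M ω = m ∧ Y ω = y ∧ RM ω = true ∧ RY ω = true) *
        pr p (fun ω => M ω = m ∧ RM ω = false ∧ RY ω = true) := by
    intro m y
    have hPM : 0 < pr p (fun ω => M ω = m) :=
      lt_of_lt_of_le (hpos11 m) (pr_mono hp0 (fun ω h => h.1))
    exact alg_cancel _ _ _ _ _ _ hPM (hCI1 m y true true) (hCI1 m y false true)
  have key_q : ∀ m y,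
      pr q (fun ω => M' ω = m ∧ Y' ω = y ∧ RM' ω = false ∧ RY' ω = true) *
        pr q (fun ω => M' ω = m ∧ RM' ω = true ∧ RY' ω = true) =
      pr q (fun ω => M' ω = m ∧ Y' ω = y ∧ RM' ω = true ∧ RY' ω = true) *
        pr q (fun ω => M' ω = m ∧ RM' ω = false ∧ RY' ω = true) := by
    intro m y
    have hPM : 0 < pr q (fun ω => M' ω = m) :=
      lt_of_lt_of_le (hpos11' m) (pr_mono hq0 (fun ω h => h.1))
    exact alg_cancel _ _ _ _ _ _ hPM (hCI1' m y true true) (hCI1' m y false true)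
  -- marginalization of the observed data over m
  have hb_p : ∀ y, pr p (fun ω => Y ω = y ∧ RM ω = false ∧ RY ω = true) =
      ∑ m, pr p (fun ω => M ω = m ∧ Y ω = y ∧ RM ω = false ∧ RY ω = true) := by
    intro y
    rw [← pr_fiber p M (fun ω => Y ω = y ∧ RM ω = false ∧ RY ω = true)]
    exact Finset.sum_congr rfl (fun m _ => pr_congr p (fun ω => by tauto))
  have hb_q : ∀ y, pr q (fun ω => Y' ω = y ∧ RM' ω = false ∧ RY' ω = true) =
      ∑ m, pr q (fun ω => M' ω = m ∧ Y' ω = y ∧ RM' ω = false ∧ RY' ω = true) := by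
    intro y
    rw [← pr_fiber q M' (fun ω => Y' ω = y ∧ RM' ω = false ∧ RY' ω = true)]
    exact Finset.sum_congr rfl (fun m _ => pr_congr q (fun ω => by tauto))
  -- the rank argument: D_p/C_p = D_q/C_q
  set v : 𝓜 → ℝ := fun m =>
    pr p (fun ω => M ω = m ∧ RM ω = false ∧ RY ω = true) /
        pr p (fun ω => M ω = m ∧ RM ω = true ∧ RY ω = true) -
      pr q (fun ω => M' ω = m ∧ RM' ω = false ∧ RY' ω = true) /
        pr q (fun ω => M' ω = m ∧ RM' ω = true ∧ RY' ω = true) with hv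
  have hvz : v = 0 := by
    apply hrank
    intro y
    have hterm : ∀ m ∈ Finset.univ,
        pr p (fun ω => M ω = m ∧ Y ω = y ∧ RM ω = true ∧ RY ω = true) * v m =
          pr p (fun ω => M ω = m ∧ Y ω = y ∧ RM ω = false ∧ RY ω = true) -
            pr q (fun ω => M' ω = m ∧ Y' ω = y ∧ RM' ω = false ∧ RY' ω = true) := by
      intro m _
      rw [hv]
      exact alg_term _ _ _ _ _ _ _ _ (key_p m y) (key_q m y) (hobs1 m y)
        (hpos11 m) (hpos11' m)
    rw [Finset.sum_congr rfl hterm, Finset.sum_sub_distrib, ← hb_p, ← hb_q,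
      hobs2 y, sub_self]
  have hcross : ∀ m,
      pr p (fun ω => M ω = m ∧ RM ω = false ∧ RY ω = true) *
        pr q (fun ω => M' ω = m ∧ RM' ω = true ∧ RY' ω = true) =
      pr q (fun ω => M' ω = m ∧ RM' ω = false ∧ RY' ω = true) *
        pr p (fun ω => M ω = m ∧ RM ω = true ∧ RY ω = true) := by
    intro m
    have h0 : pr p (fun ω => M ω = m ∧ RM ω = false ∧ RY ω = true) /
        pr p (fun ω => M ω = m ∧ RM ω = true ∧ RY ω = true) -
      pr q (fun ω => M' ω = m ∧ RM' ω = false ∧ RY' ω = true) /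
        pr q (fun ω => M' ω = m ∧ RM' ω = true ∧ RY' ω = true) = 0 := by
      have h := congrFun hvz m
      simpa [hv] using h
    have hd : pr p (fun ω => M ω = m ∧ RM ω = false ∧ RY ω = true) /
        pr p (fun ω => M ω = m ∧ RM ω = true ∧ RY ω = true) =
      pr q (fun ω => M' ω = m ∧ RM' ω = false ∧ RY' ω = true) /
        pr q (fun ω => M' ω = m ∧ RM' ω = true ∧ RY' ω = true) := by
      linarith [h0]
    exact (div_eq_div_iff (hpos11 m).ne' (hpos11' m).ne').mp hd
  -- now fix m and y and conclude
  intro m y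
  -- positivity
  have hGp : 0 < pr p (fun ω => M ω = m ∧ RM ω = true) :=
    lt_of_lt_of_le (hpos11 m) (pr_mono hp0 (fun ω h => ⟨h.1, h.2.1⟩))
  have hGq : 0 < pr q (fun ω => M' ω = m ∧ RM' ω = true) :=
    lt_of_lt_of_le (hpos11' m) (pr_mono hq0 (fun ω h => ⟨h.1, h.2.1⟩))
  have hE1 : 0 < pr p (fun ω => RM ω = true ∧ RY ω = true) :=
    lt_of_lt_of_le (hpos11 m) (pr_mono hp0 (fun ω h => ⟨h.2.1, h.2.2⟩))
  have hE0 : 0 < pr p (fun ω => RM ω = false ∧ RY ω = true) :=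
    lt_of_lt_of_le (hpos01 m) (pr_mono hp0 (fun ω h => ⟨h.2.1, h.2.2⟩))
  -- CI2 instances with conjunctions reordered
  have a4 : pr p (fun ω => RM ω = true) *
      pr p (fun ω => M ω = m ∧ RM ω = true ∧ RY ω = true) =
      pr p (fun ω => M ω = m ∧ RM ω = true) *
        pr p (fun ω => RM ω = true ∧ RY ω = true) := by
    have h := hCI2 m true true
    rwa [pr_congr p (A := fun ω => RM ω = true ∧ RY ω = true ∧ M ω = m)
        (B := fun ω => M ω = m ∧ RM ω = true ∧ RY ω = true) (fun ω => by tauto),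
      pr_congr p (A := fun ω => RM ω = true ∧ M ω = m)
        (B := fun ω => M ω = m ∧ RM ω = true) (fun ω => by tauto)] at h
  have a1 : pr p (fun ω => RM ω = false) *
      pr p (fun ω => M ω = m ∧ RM ω = false ∧ RY ω = true) =
      pr p (fun ω => M ω = m ∧ RM ω = false) *
        pr p (fun ω => RM ω = false ∧ RY ω = true) := by
    have h := hCI2 m false true
    rwa [pr_congr p (A := fun ω => RM ω = false ∧ RY ω = true ∧ M ω = m)
        (B := fun ω => M ω = m ∧ RM ω = false ∧ RY ω = true) (fun ω => by tauto),
      pr_congr p (A := fun ω => RM ω = false ∧ M ω = m)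
        (B := fun ω => M ω = m ∧ RM ω = false) (fun ω => by tauto)] at h
  have a2 : pr p (fun ω => RM ω = true) *
      pr q (fun ω => M' ω = m ∧ RM' ω = true ∧ RY' ω = true) =
      pr q (fun ω => M' ω = m ∧ RM' ω = true) *
        pr p (fun ω => RM ω = true ∧ RY ω = true) := by
    have h := hCI2' m true true
    rwa [pr_congr q (A := fun ω => RM' ω = true ∧ RY' ω = true ∧ M' ω = m)
        (B := fun ω => M' ω = m ∧ RM' ω = true ∧ RY' ω = true) (fun ω => by tauto),
      pr_congr q (A := fun ω => RM' ω = true ∧ M' ω = m)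
        (B := fun ω => M' ω = m ∧ RM' ω = true) (fun ω => by tauto),
      ← hP1, ← hE1eq] at h
  have a3 : pr p (fun ω => RM ω = false) *
      pr q (fun ω => M' ω = m ∧ RM' ω = false ∧ RY' ω = true) =
      pr q (fun ω => M' ω = m ∧ RM' ω = false) *
        pr p (fun ω => RM ω = false ∧ RY ω = true) := by
    have h := hCI2' m false true
    rwa [pr_congr q (A := fun ω => RM' ω = false ∧ RY' ω = true ∧ M' ω = m)
        (B := fun ω => M' ω = m ∧ RM' ω = false ∧ RY' ω = true) (fun ω => by tauto),
      pr_congr q (A := fun ω => RM' ω = false ∧ M' ω = m)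
        (B := fun ω => M' ω = m ∧ RM' ω = false) (fun ω => by tauto),
      ← hP0, ← hE0eq] at h
  have hHG := alg_HG _ _ _ _ _ _ _ _ _ _ _ _ a1 a3 a4 a2 (hcross m) hE0 hE1
  have ePMp : pr p (fun ω => M ω = m) =
      pr p (fun ω => M ω = m ∧ RM ω = true) +
        pr p (fun ω => M ω = m ∧ RM ω = false) := pr_split_bool p _ RM
  have ePMq : pr q (fun ω => M' ω = m) =
      pr q (fun ω => M' ω = m ∧ RM' ω = true) +
        pr q (fun ω => M' ω = m ∧ RM' ω = false) := pr_split_bool q _ RM'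
  exact alg_final _ _ _ _ _ _ _ _ _ _ _ _ _ _
    (hCI1 m y true true) (hCI1' m y true true) (hobs1 m y)
    a4 a2 ePMp ePMq hHG hGp hGq hE1
end

section
/- Suppose M, Y are finite-valued random variables and R^M, R^Y are {0,1}-valued such that Y, R^Y, R^M are mutually independent given M. If P(R^M=1, R^Y=1 | M=m) > 0 for all m and the J×(K+1) matrix Θ whose (m,y) entry for y ∈ 𝓨 is P(M=m, Y=y, R^M=1, R^Y=1) and whose last column is P(M=m, R^M=1, R^Y=0) has rank J = |𝓜|, then ζ(m) = P(R^M=0|M=m)/P(R^M=1|M=m) is the unique solution of the linear system consisting of P(Y=y, R^M=0, R^Y=1) = Σ_m P(M=m, Y=y, R^M=1, R^Y=1) ζ(m) for each y and P(R^M=0, R^Y=0) = Σ_m P(M=m, R^M=1, R^Y=0) ζ(m), and P(M=m, Y=y) is thereby uniquely determined. -/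
open Finset
open scoped Classical

lemma pr_split {Ω α : Type*} [Fintype Ω] [Fintype α] (p : Ω → ℝ)
    (A : Ω → Prop) (f : Ω → α) :
    pr p A = ∑ a, pr p (fun ω => A ω ∧ f ω = a) := by
  unfold pr
  rw [Finset.sum_comm]
  refine Finset.sum_congr rfl fun ω _ => ?_
  by_cases hA : A ω
  · simp [hA, Finset.sum_ite_eq]
  · simp [hA]

lemma core {Ω 𝓜 𝓨 : Type*} [Fintype Ω] [Fintype 𝓜] [Fintype 𝓨]
    (p : Ω → ℝ) (hp0 : ∀ ω, 0 ≤ p ω)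
    (M : Ω → 𝓜) (Y : Ω → 𝓨) (RM RY : Ω → Bool)
    (hCI : ∀ m y r s,
      pr p (fun ω => M ω = m) * pr p (fun ω => M ω = m) *
          pr p (fun ω => M ω = m ∧ Y ω = y ∧ RM ω = r ∧ RY ω = s) =
        pr p (fun ω => M ω = m ∧ Y ω = y) * pr p (fun ω => M ω = m ∧ RM ω = r) *
          pr p (fun ω => M ω = m ∧ RY ω = s))
    (hpos : ∀ m, 0 < pr p (fun ω => M ω = m ∧ RM ω = true ∧ RY ω = true)) :
    ∀ m,
    (∀ y, pr p (fun ω => M ω = m ∧ Y ω = y ∧ RM ω = false ∧ RY ω = true) =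
      pr p (fun ω => M ω = m ∧ Y ω = y ∧ RM ω = true ∧ RY ω = true) *
        (pr p (fun ω => RM ω = false ∧ M ω = m) / pr p (fun ω => RM ω = true ∧ M ω = m))) ∧
    (pr p (fun ω => M ω = m ∧ RM ω = false ∧ RY ω = false) =
      pr p (fun ω => M ω = m ∧ RM ω = true ∧ RY ω = false) *
        (pr p (fun ω => RM ω = false ∧ M ω = m) / pr p (fun ω => RM ω = true ∧ M ω = m))) ∧
    (∀ y, pr p (fun ω => M ω = m ∧ Y ω = y) =
      pr p (fun ω => M ω = m ∧ Y ω = y ∧ RM ω = true ∧ RY ω = true) *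
        (pr p (fun ω => M ω = m ∧ RM ω = true ∧ RY ω = true) +
         pr p (fun ω => M ω = m ∧ RM ω = true ∧ RY ω = false)) *
        (1 + pr p (fun ω => RM ω = false ∧ M ω = m) / pr p (fun ω => RM ω = true ∧ M ω = m)) /
        pr p (fun ω => M ω = m ∧ RM ω = true ∧ RY ω = true)) := by
  intro m
  -- abbreviations
  set Pm := pr p (fun ω => M ω = m) with hPm_def
  set Pm1 := pr p (fun ω => M ω = m ∧ RM ω = true) with hPm1_def
  set Pm0 := pr p (fun ω => M ω = m ∧ RM ω = false) with hPm0_def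
  set S1 := pr p (fun ω => M ω = m ∧ RY ω = true) with hS1_def
  set S0 := pr p (fun ω => M ω = m ∧ RY ω = false) with hS0_def
  set c := pr p (fun ω => M ω = m ∧ RM ω = true ∧ RY ω = true) with hc_def
  set b := pr p (fun ω => M ω = m ∧ RM ω = true ∧ RY ω = false) with hb_def
  have hzn : pr p (fun ω => RM ω = false ∧ M ω = m) = Pm0 :=
    pr_congr p fun ω => and_comm
  have hzd : pr p (fun ω => RM ω = true ∧ M ω = m) = Pm1 :=
    pr_congr p fun ω => and_comm
  have hcpos : 0 < c := hpos m
  have hPm1pos : 0 < Pm1 :=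
    lt_of_lt_of_le hcpos (pr_mono hp0 fun ω h => ⟨h.1, h.2.1⟩)
  have hPmpos : 0 < Pm :=
    lt_of_lt_of_le hcpos (pr_mono hp0 fun ω h => h.1)
  -- sum identities over y
  have ha_sum : ∑ y, pr p (fun ω => M ω = m ∧ Y ω = y ∧ RM ω = true ∧ RY ω = true) = c := by
    rw [hc_def, pr_split p _ Y]
    exact Finset.sum_congr rfl fun y _ => pr_congr p fun ω => by tauto
  have hW_sum : ∑ y, pr p (fun ω => M ω = m ∧ Y ω = y ∧ RM ω = true ∧ RY ω = false) = b := by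
    rw [hb_def, pr_split p _ Y]
    exact Finset.sum_congr rfl fun y _ => pr_congr p fun ω => by tauto
  have hZ_sum : ∑ y, pr p (fun ω => M ω = m ∧ Y ω = y ∧ RM ω = false ∧ RY ω = false) =
      pr p (fun ω => M ω = m ∧ RM ω = false ∧ RY ω = false) := by
    rw [pr_split p (fun ω => M ω = m ∧ RM ω = false ∧ RY ω = false) Y]
    exact Finset.sum_congr rfl fun y _ => pr_congr p fun ω => by tauto
  have hJ_sum : ∑ y, pr p (fun ω => M ω = m ∧ Y ω = y) = Pm := by
    rw [hPm_def, pr_split p _ Y]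
  -- splits
  have hPm_split : Pm = Pm1 + Pm0 := by
    rw [hPm_def, pr_split p _ RM, Fintype.sum_bool]
  have hPm1_split : Pm1 = c + b := by
    rw [hPm1_def, pr_split p _ RY, Fintype.sum_bool]
    congr 1 <;> exact pr_congr p fun ω => by tauto
  -- summed CI identities
  have hs11 : Pm * Pm * c = Pm * (Pm1 * S1) := by
    calc Pm * Pm * c = ∑ y, Pm * Pm * pr p (fun ω => M ω = m ∧ Y ω = y ∧ RM ω = true ∧ RY ω = true) := by
          rw [← Finset.mul_sum, ha_sum]
      _ = ∑ y, pr p (fun ω => M ω = m ∧ Y ω = y) * Pm1 * S1 :=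
          Finset.sum_congr rfl fun y _ => hCI m y true true
      _ = Pm * (Pm1 * S1) := by
          rw [← Finset.sum_mul, ← Finset.sum_mul, hJ_sum]; ring
  have hs10 : Pm * Pm * b = Pm * (Pm1 * S0) := by
    calc Pm * Pm * b = ∑ y, Pm * Pm * pr p (fun ω => M ω = m ∧ Y ω = y ∧ RM ω = true ∧ RY ω = false) := by
          rw [← Finset.mul_sum, hW_sum]
      _ = ∑ y, pr p (fun ω => M ω = m ∧ Y ω = y) * Pm1 * S0 :=
          Finset.sum_congr rfl fun y _ => hCI m y true false
      _ = Pm * (Pm1 * S0) := by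
          rw [← Finset.sum_mul, ← Finset.sum_mul, hJ_sum]; ring
  have hs00 : Pm * Pm * pr p (fun ω => M ω = m ∧ RM ω = false ∧ RY ω = false) = Pm * (Pm0 * S0) := by
    calc Pm * Pm * pr p (fun ω => M ω = m ∧ RM ω = false ∧ RY ω = false)
        = ∑ y, Pm * Pm * pr p (fun ω => M ω = m ∧ Y ω = y ∧ RM ω = false ∧ RY ω = false) := by
          rw [← Finset.mul_sum, hZ_sum]
      _ = ∑ y, pr p (fun ω => M ω = m ∧ Y ω = y) * Pm0 * S0 :=
          Finset.sum_congr rfl fun y _ => hCI m y false false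
      _ = Pm * (Pm0 * S0) := by
          rw [← Finset.sum_mul, ← Finset.sum_mul, hJ_sum]; ring
  have hPS : Pm * c = Pm1 * S1 := mul_left_cancel₀ hPmpos.ne' (by linear_combination hs11)
  refine ⟨?_, ?_, ?_⟩
  · -- key1
    intro y
    have h11 := hCI m y true true
    have h01 := hCI m y false true
    rw [hzn, hzd]
    have key : pr p (fun ω => M ω = m ∧ Y ω = y ∧ RM ω = false ∧ RY ω = true) * Pm1 =
        pr p (fun ω => M ω = m ∧ Y ω = y ∧ RM ω = true ∧ RY ω = true) * Pm0 := by
      have h2 : (Pm * Pm) * (pr p (fun ω => M ω = m ∧ Y ω = y ∧ RM ω = false ∧ RY ω = true) * Pm1) =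
          (Pm * Pm) * (pr p (fun ω => M ω = m ∧ Y ω = y ∧ RM ω = true ∧ RY ω = true) * Pm0) := by
        linear_combination Pm1 * h01 - Pm0 * h11
      exact mul_left_cancel₀ (by positivity) h2
    field_simp
    linear_combination key
  · -- key2
    rw [hzn, hzd]
    have key : pr p (fun ω => M ω = m ∧ RM ω = false ∧ RY ω = false) * Pm1 = b * Pm0 := by
      have h2 : Pm * (Pm * (pr p (fun ω => M ω = m ∧ RM ω = false ∧ RY ω = false) * Pm1)) =
          Pm * (Pm * (b * Pm0)) := by
        linear_combination Pm1 * hs00 - Pm0 * hs10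
      exact mul_left_cancel₀ hPmpos.ne' (mul_left_cancel₀ hPmpos.ne' h2)
    field_simp
    linear_combination key
  · -- key3
    intro y
    have h11 := hCI m y true true
    rw [hzn, hzd]
    have hJc : pr p (fun ω => M ω = m ∧ Y ω = y) * c =
        Pm * pr p (fun ω => M ω = m ∧ Y ω = y ∧ RM ω = true ∧ RY ω = true) := by
      have h2 : Pm * (pr p (fun ω => M ω = m ∧ Y ω = y) * c) =
          Pm * (Pm * pr p (fun ω => M ω = m ∧ Y ω = y ∧ RM ω = true ∧ RY ω = true)) := by
        linear_combination (-1 : ℝ) * h11 + pr p (fun ω => M ω = m ∧ Y ω = y) * hPS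
      exact mul_left_cancel₀ hPmpos.ne' h2
    rw [eq_div_iff hcpos.ne']
    have h1pz : (1 : ℝ) + Pm0 / Pm1 = Pm / Pm1 := by
      rw [hPm_split]; field_simp
    have haux : pr p (fun ω => M ω = m ∧ Y ω = y ∧ RM ω = true ∧ RY ω = true) * Pm1 * (Pm / Pm1)
        = pr p (fun ω => M ω = m ∧ Y ω = y ∧ RM ω = true ∧ RY ω = true) * Pm := by
      field_simp
    rw [h1pz, ← hPm1_split, haux]
    linear_combination hJc

/-- Theorem 4 (discrete case).  With `Y, R^Y, R^M` mutually independent given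
`M`, positivity `P(R^M=1, R^Y=1 | M=m) > 0`, and the augmented `J × (K+1)`
matrix (with columns `P(M=m, Y=y, R^M=1, R^Y=1)` and `P(M=m, R^M=1, R^Y=0)`)
of full row rank, `ζ(m) = P(R^M=0|M=m)/P(R^M=1|M=m)` is the unique solution of
the corresponding linear system and `P(M=m, Y=y)` is uniquely determined by the
observed-data distribution. -/
theorem outcome_missing_on_mediator_identification
    {Ω Ω' 𝓜 𝓨 : Type*} [Fintype Ω] [Fintype Ω'] [Fintype 𝓜] [Fintype 𝓨]
    (p : Ω → ℝ) (hp0 : ∀ ω, 0 ≤ p ω) (hp1 : ∑ ω, p ω = 1)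
    (M : Ω → 𝓜) (Y : Ω → 𝓨) (RM RY : Ω → Bool)
    -- Y, R^Y, R^M mutually independent given M
    (hCI : ∀ m y r s,
      pr p (fun ω => M ω = m) * pr p (fun ω => M ω = m) *
          pr p (fun ω => M ω = m ∧ Y ω = y ∧ RM ω = r ∧ RY ω = s) =
        pr p (fun ω => M ω = m ∧ Y ω = y) * pr p (fun ω => M ω = m ∧ RM ω = r) *
          pr p (fun ω => M ω = m ∧ RY ω = s))
    -- positivity
    (hpos : ∀ m, 0 < pr p (fun ω => M ω = m ∧ RM ω = true ∧ RY ω = true))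
    -- the J × (K+1) matrix has full row rank J
    (hrank : ∀ v : 𝓜 → ℝ,
      ((∀ y, ∑ m,
          pr p (fun ω => M ω = m ∧ Y ω = y ∧ RM ω = true ∧ RY ω = true) * v m = 0) ∧
        (∑ m, pr p (fun ω => M ω = m ∧ RM ω = true ∧ RY ω = false) * v m = 0)) →
      v = 0)
    -- a second model satisfying the same assumptions
    (q : Ω' → ℝ) (hq0 : ∀ ω, 0 ≤ q ω) (hq1 : ∑ ω, q ω = 1)
    (M' : Ω' → 𝓜) (Y' : Ω' → 𝓨) (RM' RY' : Ω' → Bool)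
    (hCI' : ∀ m y r s,
      pr q (fun ω => M' ω = m) * pr q (fun ω => M' ω = m) *
          pr q (fun ω => M' ω = m ∧ Y' ω = y ∧ RM' ω = r ∧ RY' ω = s) =
        pr q (fun ω => M' ω = m ∧ Y' ω = y) * pr q (fun ω => M' ω = m ∧ RM' ω = r) *
          pr q (fun ω => M' ω = m ∧ RY' ω = s))
    (hpos' : ∀ m, 0 < pr q (fun ω => M' ω = m ∧ RM' ω = true ∧ RY' ω = true))
    -- with the same observed-data distribution
    (hobs1 : ∀ m y,
      pr p (fun ω => M ω = m ∧ Y ω = y ∧ RM ω = true ∧ RY ω = true) =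
        pr q (fun ω => M' ω = m ∧ Y' ω = y ∧ RM' ω = true ∧ RY' ω = true))
    (hobs2 : ∀ y,
      pr p (fun ω => Y ω = y ∧ RM ω = false ∧ RY ω = true) =
        pr q (fun ω => Y' ω = y ∧ RM' ω = false ∧ RY' ω = true))
    (hobs3 : ∀ m,
      pr p (fun ω => M ω = m ∧ RM ω = true ∧ RY ω = false) =
        pr q (fun ω => M' ω = m ∧ RM' ω = true ∧ RY' ω = false))
    (hobs4 : pr p (fun ω => RM ω = false ∧ RY ω = false) =
        pr q (fun ω => RM' ω = false ∧ RY' ω = false)) :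
    -- ζ solves the linear system
    ((∀ y, pr p (fun ω => Y ω = y ∧ RM ω = false ∧ RY ω = true) =
        ∑ m, pr p (fun ω => M ω = m ∧ Y ω = y ∧ RM ω = true ∧ RY ω = true) *
          (pr p (fun ω => RM ω = false ∧ M ω = m) /
            pr p (fun ω => RM ω = true ∧ M ω = m))) ∧
      (pr p (fun ω => RM ω = false ∧ RY ω = false) =
        ∑ m, pr p (fun ω => M ω = m ∧ RM ω = true ∧ RY ω = false) *
          (pr p (fun ω => RM ω = false ∧ M ω = m) /
            pr p (fun ω => RM ω = true ∧ M ω = m))) ∧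
      -- and is its unique solution
      (∀ ζ' : 𝓜 → ℝ,
        ((∀ y, pr p (fun ω => Y ω = y ∧ RM ω = false ∧ RY ω = true) =
            ∑ m, pr p (fun ω => M ω = m ∧ Y ω = y ∧ RM ω = true ∧ RY ω = true) * ζ' m) ∧
          (pr p (fun ω => RM ω = false ∧ RY ω = false) =
            ∑ m, pr p (fun ω => M ω = m ∧ RM ω = true ∧ RY ω = false) * ζ' m)) →
        ζ' = fun m => pr p (fun ω => RM ω = false ∧ M ω = m) /
          pr p (fun ω => RM ω = true ∧ M ω = m))) ∧
    -- consequently the joint distribution of (M, Y) is identified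
    (∀ m y, pr p (fun ω => M ω = m ∧ Y ω = y) =
        pr q (fun ω => M' ω = m ∧ Y' ω = y)) := by
  have key := core p hp0 M Y RM RY hCI hpos
  have keyq := core q hq0 M' Y' RM' RY' hCI' hpos'
  have part1 : ∀ y, pr p (fun ω => Y ω = y ∧ RM ω = false ∧ RY ω = true) =
      ∑ m, pr p (fun ω => M ω = m ∧ Y ω = y ∧ RM ω = true ∧ RY ω = true) *
        (pr p (fun ω => RM ω = false ∧ M ω = m) /
          pr p (fun ω => RM ω = true ∧ M ω = m)) := by
    intro y
    rw [pr_split p (fun ω => Y ω = y ∧ RM ω = false ∧ RY ω = true) M]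
    refine Finset.sum_congr rfl fun m _ => ?_
    rw [pr_congr p
      (B := fun ω => M ω = m ∧ Y ω = y ∧ RM ω = false ∧ RY ω = true) (fun ω => by tauto)]
    exact (key m).1 y
  have part2 : pr p (fun ω => RM ω = false ∧ RY ω = false) =
      ∑ m, pr p (fun ω => M ω = m ∧ RM ω = true ∧ RY ω = false) *
        (pr p (fun ω => RM ω = false ∧ M ω = m) /
          pr p (fun ω => RM ω = true ∧ M ω = m)) := by
    rw [pr_split p (fun ω => RM ω = false ∧ RY ω = false) M]
    refine Finset.sum_congr rfl fun m _ => ?_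
    rw [pr_congr p
      (B := fun ω => M ω = m ∧ RM ω = false ∧ RY ω = false) (fun ω => by tauto)]
    exact (key m).2.1
  have part1q : ∀ y, pr q (fun ω => Y' ω = y ∧ RM' ω = false ∧ RY' ω = true) =
      ∑ m, pr q (fun ω => M' ω = m ∧ Y' ω = y ∧ RM' ω = true ∧ RY' ω = true) *
        (pr q (fun ω => RM' ω = false ∧ M' ω = m) /
          pr q (fun ω => RM' ω = true ∧ M' ω = m)) := by
    intro y
    rw [pr_split q (fun ω => Y' ω = y ∧ RM' ω = false ∧ RY' ω = true) M']
    refine Finset.sum_congr rfl fun m _ => ?_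
    rw [pr_congr q
      (B := fun ω => M' ω = m ∧ Y' ω = y ∧ RM' ω = false ∧ RY' ω = true) (fun ω => by tauto)]
    exact (keyq m).1 y
  have part2q : pr q (fun ω => RM' ω = false ∧ RY' ω = false) =
      ∑ m, pr q (fun ω => M' ω = m ∧ RM' ω = true ∧ RY' ω = false) *
        (pr q (fun ω => RM' ω = false ∧ M' ω = m) /
          pr q (fun ω => RM' ω = true ∧ M' ω = m)) := by
    rw [pr_split q (fun ω => RM' ω = false ∧ RY' ω = false) M']
    refine Finset.sum_congr rfl fun m _ => ?_
    rw [pr_congr q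
      (B := fun ω => M' ω = m ∧ RM' ω = false ∧ RY' ω = false) (fun ω => by tauto)]
    exact (keyq m).2.1
  have uniq : ∀ ζ' : 𝓜 → ℝ,
      ((∀ y, pr p (fun ω => Y ω = y ∧ RM ω = false ∧ RY ω = true) =
          ∑ m, pr p (fun ω => M ω = m ∧ Y ω = y ∧ RM ω = true ∧ RY ω = true) * ζ' m) ∧
        (pr p (fun ω => RM ω = false ∧ RY ω = false) =
          ∑ m, pr p (fun ω => M ω = m ∧ RM ω = true ∧ RY ω = false) * ζ' m)) →
      ζ' = fun m => pr p (fun ω => RM ω = false ∧ M ω = m) /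
        pr p (fun ω => RM ω = true ∧ M ω = m) := by
    rintro ζ' ⟨h1, h2⟩
    have hv := hrank (fun m => ζ' m -
        pr p (fun ω => RM ω = false ∧ M ω = m) / pr p (fun ω => RM ω = true ∧ M ω = m))
      ⟨fun y => by
          simp only [mul_sub, Finset.sum_sub_distrib]
          rw [← h1 y, ← part1 y, sub_self],
        by
          simp only [mul_sub, Finset.sum_sub_distrib]
          rw [← h2, ← part2, sub_self]⟩
    funext m
    have := congrFun hv m
    simpa [sub_eq_zero] using this
  refine ⟨⟨part1, part2, uniq⟩, ?_⟩
  -- identification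
  have hζq := uniq (fun m => pr q (fun ω => RM' ω = false ∧ M' ω = m) /
      pr q (fun ω => RM' ω = true ∧ M' ω = m))
    ⟨fun y => by
        rw [hobs2 y, part1q y]
        exact Finset.sum_congr rfl fun m _ => by rw [hobs1 m y],
      by
        rw [hobs4, part2q]
        exact Finset.sum_congr rfl fun m _ => by rw [hobs3 m]⟩
  intro m y
  have hζm : pr p (fun ω => RM ω = false ∧ M ω = m) /
      pr p (fun ω => RM ω = true ∧ M ω = m) =
      pr q (fun ω => RM' ω = false ∧ M' ω = m) /
      pr q (fun ω => RM' ω = true ∧ M' ω = m) := (congrFun hζq m).symm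
  have hc : pr p (fun ω => M ω = m ∧ RM ω = true ∧ RY ω = true) =
      pr q (fun ω => M' ω = m ∧ RM' ω = true ∧ RY' ω = true) := by
    rw [pr_split p (fun ω => M ω = m ∧ RM ω = true ∧ RY ω = true) Y,
        pr_split q (fun ω => M' ω = m ∧ RM' ω = true ∧ RY' ω = true) Y']
    refine Finset.sum_congr rfl fun y' _ => ?_
    rw [pr_congr p
        (B := fun ω => M ω = m ∧ Y ω = y' ∧ RM ω = true ∧ RY ω = true) (fun ω => by tauto),
      pr_congr q
        (B := fun ω => M' ω = m ∧ Y' ω = y' ∧ RM' ω = true ∧ RY' ω = true) (fun ω => by tauto),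
      hobs1 m y']
  rw [(key m).2.2 y, (keyq m).2.2 y, hobs1 m y, hobs3 m, hc, hζm]
end

section
/- There exist two distinct joint distributions of (M, Y, R^M, R^Y) on {0,1}^4, each satisfying the independence conditions of Figure S1 given by the DAG M → Y, M → R^M, Y → R^Y, R^M → R^Y (so R^M ⊥ Y | M, and R^Y depends on both Y and R^M), that induce exactly the observable probabilities (P_{1111}, P_{0111}, P_{1011}, P_{0011}, P_{+101}, P_{+001}, P_{1+10}, P_{0+10}, P_{++00}) = (6/20, 2/20, 1/20, 1/20, 2/20, 1/20, 2/20, 1/20, 4/20), but that yield different values of P(Y=1, M=1); in particular one yields P(Y=1,M=1) = 17/30 and the other 3/5. -/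
open Finset

/-- The joint law of `(M, Y, R^M, R^Y)` factorizes according to the DAG
`M → Y`, `M → R^M`, `Y → R^Y`, `R^M → R^Y`:
`P(m,y,r,s) = P(M=m) P(Y=y|M=m) P(R^M=r|M=m) P(R^Y=s|Y=y,R^M=r)`. -/
def FactorizesFig1 (p : Bool × Bool × Bool × Bool → ℝ) : Prop :=
  ∃ (fM : Bool → ℝ) (fY fRM : Bool → Bool → ℝ) (fRY : Bool → Bool → Bool → ℝ),
    (∀ m, 0 ≤ fM m) ∧ (∑ m, fM m) = 1 ∧
    (∀ m y, 0 ≤ fY m y) ∧ (∀ m, (∑ y, fY m y) = 1) ∧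
    (∀ m r, 0 ≤ fRM m r) ∧ (∀ m, (∑ r, fRM m r) = 1) ∧
    (∀ y r s, 0 ≤ fRY y r s) ∧ (∀ y r, (∑ s, fRY y r s) = 1) ∧
    (∀ m y r s, p (m, y, r, s) = fM m * fY m y * fRM m r * fRY y r s)


/-- generic product distribution builder -/
def jointP (pi1 c1 c0 r1 r0 s11 s01 s10 s00 : ℝ) :
    Bool × Bool × Bool × Bool → ℝ := fun x =>
  (bif x.1 then pi1 else 1 - pi1) *
  (bif x.1 then (bif x.2.1 then c1 else 1 - c1) else (bif x.2.1 then c0 else 1 - c0)) *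
  (bif x.1 then (bif x.2.2.1 then r1 else 1 - r1) else (bif x.2.2.1 then r0 else 1 - r0)) *
  (let b := bif x.2.1 then (bif x.2.2.1 then s11 else s10) else (bif x.2.2.1 then s01 else s00);
   bif x.2.2.2 then b else 1 - b)

lemma jointP_fact (pi1 c1 c0 r1 r0 s11 s01 s10 s00 : ℝ)
    (h1 : 0 ≤ pi1) (h1' : pi1 ≤ 1) (h2 : 0 ≤ c1) (h2' : c1 ≤ 1)
    (h3 : 0 ≤ c0) (h3' : c0 ≤ 1) (h4 : 0 ≤ r1) (h4' : r1 ≤ 1)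
    (h5 : 0 ≤ r0) (h5' : r0 ≤ 1) (h6 : 0 ≤ s11) (h6' : s11 ≤ 1)
    (h7 : 0 ≤ s01) (h7' : s01 ≤ 1) (h8 : 0 ≤ s10) (h8' : s10 ≤ 1)
    (h9 : 0 ≤ s00) (h9' : s00 ≤ 1) :
    FactorizesFig1 (jointP pi1 c1 c0 r1 r0 s11 s01 s10 s00) := by
  refine ⟨fun m => bif m then pi1 else 1 - pi1,
    fun m y => bif m then (bif y then c1 else 1 - c1) else (bif y then c0 else 1 - c0),
    fun m r => bif m then (bif r then r1 else 1 - r1) else (bif r then r0 else 1 - r0),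
    fun y r s => (let b := bif y then (bif r then s11 else s10) else (bif r then s01 else s00);
      bif s then b else 1 - b), ?_, ?_, ?_, ?_, ?_, ?_, ?_, ?_, ?_⟩
  · intro m; cases m <;> simp <;> linarith
  · simp [Fintype.sum_bool]
  · intro m y; cases m <;> cases y <;> simp <;> linarith
  · intro m; cases m <;> simp [Fintype.sum_bool]
  · intro m r; cases m <;> cases r <;> simp <;> linarith
  · intro m; cases m <;> simp [Fintype.sum_bool]
  · intro y r s; cases y <;> cases r <;> cases s <;> simp <;> linarith
  · intro y r; cases y <;> cases r <;> simp [Fintype.sum_bool]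
  · intro m y r s; rfl

/-- Counterexample (i): when `R^Y` depends on both `Y` and `R^M`, two distinct
joint distributions of `(M, Y, R^M, R^Y)` induce exactly the observable
probabilities `(6/20, 2/20, 1/20, 1/20, 2/20, 1/20, 2/20, 1/20, 4/20)` but
yield `P(Y=1, M=1) = 17/30` and `P(Y=1, M=1) = 3/5` respectively. -/
theorem unidentifiable_RY_depends_Y_RM :
    ∃ p q : Bool × Bool × Bool × Bool → ℝ,
      FactorizesFig1 p ∧ FactorizesFig1 q ∧
      -- observables of p
      (p (true, true, true, true) = 6/20 ∧ p (false, true, true, true) = 2/20 ∧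
        p (true, false, true, true) = 1/20 ∧ p (false, false, true, true) = 1/20 ∧
        (∑ m, p (m, true, false, true)) = 2/20 ∧
        (∑ m, p (m, false, false, true)) = 1/20 ∧
        (∑ y, p (true, y, true, false)) = 2/20 ∧
        (∑ y, p (false, y, true, false)) = 1/20 ∧
        (∑ m, ∑ y, p (m, y, false, false)) = 4/20) ∧
      -- the same observables for q
      (q (true, true, true, true) = 6/20 ∧ q (false, true, true, true) = 2/20 ∧
        q (true, false, true, true) = 1/20 ∧ q (false, false, true, true) = 1/20 ∧
        (∑ m, q (m, true, false, true)) = 2/20 ∧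
        (∑ m, q (m, false, false, true)) = 1/20 ∧
        (∑ y, q (true, y, true, false)) = 2/20 ∧
        (∑ y, q (false, y, true, false)) = 1/20 ∧
        (∑ m, ∑ y, q (m, y, false, false)) = 4/20) ∧
      -- yet different joint laws of (M, Y)
      (∑ r, ∑ s, p (true, true, r, s)) = 17/30 ∧
      (∑ r, ∑ s, q (true, true, r, s)) = 3/5 := by
  refine ⟨jointP (17/25) (5/6) (5/8) (45/68) (5/8) (4/5) (2/3) (3/8) (3/5),
    jointP (18/25) (5/6) (5/8) (5/8) (5/7) (4/5) (2/3) (4/11) (2/3),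
    jointP_fact _ _ _ _ _ _ _ _ _ (by norm_num) (by norm_num) (by norm_num) (by norm_num)
      (by norm_num) (by norm_num) (by norm_num) (by norm_num) (by norm_num) (by norm_num)
      (by norm_num) (by norm_num) (by norm_num) (by norm_num) (by norm_num) (by norm_num)
      (by norm_num) (by norm_num),
    jointP_fact _ _ _ _ _ _ _ _ _ (by norm_num) (by norm_num) (by norm_num) (by norm_num)
      (by norm_num) (by norm_num) (by norm_num) (by norm_num) (by norm_num) (by norm_num)
      (by norm_num) (by norm_num) (by norm_num) (by norm_num) (by norm_num) (by norm_num)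
      (by norm_num) (by norm_num),
    ?_, ?_, ?_, ?_⟩ <;>
  simp only [Fintype.sum_bool, jointP] <;> norm_num
end

section
/- There exist two distinct joint distributions of (M, Y, R^M, R^Y) on {0,1}^4 satisfying M → Y, M → R^M, M → R^Y, R^M → R^Y (so that Y ⊥ (R^M, R^Y) | M), both inducing the observable probabilities (P_{1111}, P_{0111}, P_{1011}, P_{0011}, P_{+101}, P_{+001}, P_{1+10}, P_{0+10}, P_{++00}) = (12/40, 4/40, 2/40, 4/40, 4/40, 1/40, 4/40, 4/40, 5/40), with P(M=1) equal to 3/5 in one and 13/20 in the other, hence P(Y=1, M=1) equal to 18/35 and 39/70 respectively. -/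
open Finset

/-- The joint law of `(M, Y, R^M, R^Y)` factorizes according to the DAG
`M → Y`, `M → R^M`, `M → R^Y`, `R^M → R^Y`:
`P(m,y,r,s) = P(M=m) P(Y=y|M=m) P(R^M=r|M=m) P(R^Y=s|M=m,R^M=r)`
(so that `Y ⊥ (R^M, R^Y) | M`). -/
def FactorizesFig2 (p : Bool × Bool × Bool × Bool → ℝ) : Prop :=
  ∃ (fM : Bool → ℝ) (fY fRM : Bool → Bool → ℝ) (fRY : Bool → Bool → Bool → ℝ),
    (∀ m, 0 ≤ fM m) ∧ (∑ m, fM m) = 1 ∧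
    (∀ m y, 0 ≤ fY m y) ∧ (∀ m, (∑ y, fY m y) = 1) ∧
    (∀ m r, 0 ≤ fRM m r) ∧ (∀ m, (∑ r, fRM m r) = 1) ∧
    (∀ m r s, 0 ≤ fRY m r s) ∧ (∀ m r, (∑ s, fRY m r s) = 1) ∧
    (∀ m y r s, p (m, y, r, s) = fM m * fY m y * fRM m r * fRY m r s)

noncomputable def figP : Bool × Bool × Bool × Bool → ℝ :=
  fun x => (if x.1 then (3:ℝ)/5 else 2/5) *
    (if x.1 then (if x.2.1 then (6:ℝ)/7 else 1/7) else (if x.2.1 then (1:ℝ)/2 else 1/2)) *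
    (if x.1 then (if x.2.2.1 then (3:ℝ)/4 else 1/4) else (if x.2.2.1 then (3:ℝ)/4 else 1/4)) *
    (if x.1 then (if x.2.2.1 then (if x.2.2.2 then (7:ℝ)/9 else 2/9) else (if x.2.2.2 then (7:ℝ)/10 else 3/10))
     else (if x.2.2.1 then (if x.2.2.2 then (2:ℝ)/3 else 1/3) else (if x.2.2.2 then (1:ℝ)/5 else 4/5)))

noncomputable def figQ : Bool × Bool × Bool × Bool → ℝ :=
  fun x => (if x.1 then (13:ℝ)/20 else 7/20) *
    (if x.1 then (if x.2.1 then (6:ℝ)/7 else 1/7) else (if x.2.1 then (1:ℝ)/2 else 1/2)) *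
    (if x.1 then (if x.2.2.1 then (9:ℝ)/13 else 4/13) else (if x.2.2.1 then (6:ℝ)/7 else 1/7)) *
    (if x.1 then (if x.2.2.1 then (if x.2.2.2 then (7:ℝ)/9 else 2/9) else (if x.2.2.2 then (21:ℝ)/40 else 19/40))
     else (if x.2.2.1 then (if x.2.2.2 then (2:ℝ)/3 else 1/3) else (if x.2.2.2 then (2:ℝ)/5 else 3/5)))

/-- Counterexample (ii): when `R^Y` depends on both `M` and `R^M`, two distinct
joint distributions of `(M, Y, R^M, R^Y)` induce the observable probabilities
`(12/40, 4/40, 2/40, 4/40, 4/40, 1/40, 4/40, 4/40, 5/40)`, with `P(M=1)` equal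
to `3/5` in one and `13/20` in the other, hence `P(Y=1, M=1)` equal to `18/35`
and `39/70` respectively. -/
theorem unidentifiable_RY_depends_M_RM :
    ∃ p q : Bool × Bool × Bool × Bool → ℝ,
      FactorizesFig2 p ∧ FactorizesFig2 q ∧
      -- observables of p
      (p (true, true, true, true) = 12/40 ∧ p (false, true, true, true) = 4/40 ∧
        p (true, false, true, true) = 2/40 ∧ p (false, false, true, true) = 4/40 ∧
        (∑ m, p (m, true, false, true)) = 4/40 ∧
        (∑ m, p (m, false, false, true)) = 1/40 ∧
        (∑ y, p (true, y, true, false)) = 4/40 ∧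
        (∑ y, p (false, y, true, false)) = 4/40 ∧
        (∑ m, ∑ y, p (m, y, false, false)) = 5/40) ∧
      -- the same observables for q
      (q (true, true, true, true) = 12/40 ∧ q (false, true, true, true) = 4/40 ∧
        q (true, false, true, true) = 2/40 ∧ q (false, false, true, true) = 4/40 ∧
        (∑ m, q (m, true, false, true)) = 4/40 ∧
        (∑ m, q (m, false, false, true)) = 1/40 ∧
        (∑ y, q (true, y, true, false)) = 4/40 ∧
        (∑ y, q (false, y, true, false)) = 4/40 ∧
        (∑ m, ∑ y, q (m, y, false, false)) = 5/40) ∧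
      -- different marginals of M
      (∑ y, ∑ r, ∑ s, p (true, y, r, s)) = 3/5 ∧
      (∑ y, ∑ r, ∑ s, q (true, y, r, s)) = 13/20 ∧
      -- hence different joint laws of (M, Y)
      (∑ r, ∑ s, p (true, true, r, s)) = 18/35 ∧
      (∑ r, ∑ s, q (true, true, r, s)) = 39/70 := by
  refine ⟨figP, figQ, ?_, ?_, ?_, ?_, ?_, ?_, ?_, ?_⟩
  · exact ⟨fun m => if m then 3/5 else 2/5,
      fun m y => if m then (if y then 6/7 else 1/7) else (if y then 1/2 else 1/2),
      fun m r => if m then (if r then 3/4 else 1/4) else (if r then 3/4 else 1/4),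
      fun m r s => if m then (if r then (if s then 7/9 else 2/9) else (if s then 7/10 else 3/10))
        else (if r then (if s then 2/3 else 1/3) else (if s then 1/5 else 4/5)),
      fun m => by cases m <;> norm_num,
      by simp [Fintype.sum_bool]; norm_num,
      fun m y => by cases m <;> cases y <;> norm_num,
      fun m => by cases m <;> simp [Fintype.sum_bool] <;> norm_num,
      fun m r => by cases m <;> cases r <;> norm_num,
      fun m => by cases m <;> simp [Fintype.sum_bool] <;> norm_num,
      fun m r s => by cases m <;> cases r <;> cases s <;> norm_num,
      fun m r => by cases m <;> cases r <;> simp [Fintype.sum_bool] <;> norm_num,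
      fun m y r s => rfl⟩
  · exact ⟨fun m => if m then 13/20 else 7/20,
      fun m y => if m then (if y then 6/7 else 1/7) else (if y then 1/2 else 1/2),
      fun m r => if m then (if r then 9/13 else 4/13) else (if r then 6/7 else 1/7),
      fun m r s => if m then (if r then (if s then 7/9 else 2/9) else (if s then 21/40 else 19/40))
        else (if r then (if s then 2/3 else 1/3) else (if s then 2/5 else 3/5)),
      fun m => by cases m <;> norm_num,
      by simp [Fintype.sum_bool]; norm_num,
      fun m y => by cases m <;> cases y <;> norm_num,
      fun m => by cases m <;> simp [Fintype.sum_bool] <;> norm_num,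
      fun m r => by cases m <;> cases r <;> norm_num,
      fun m => by cases m <;> simp [Fintype.sum_bool] <;> norm_num,
      fun m r s => by cases m <;> cases r <;> cases s <;> norm_num,
      fun m r => by cases m <;> cases r <;> simp [Fintype.sum_bool] <;> norm_num,
      fun m y r s => rfl⟩
  all_goals simp [figP, figQ, Fintype.sum_bool] <;> norm_num
end

section
/- There exist two distinct joint distributions of (M, Y, R^M, R^Y) on {0,1}^4 factoring as P(M)P(Y|M)P(R^M|M)P(R^Y|M,Y) (i.e., R^Y depends on both M and Y, and R^M ⊥ (Y,R^Y) | M) that both induce the observable probabilities (P_{1111}, P_{0111}, P_{1011}, P_{0011}, P_{+101}, P_{+001}, P_{1+10}, P_{0+10}, P_{++00}) = (18/96, 6/96, 3/96, 2/96, 12/96, 3/96, 15/96, 16/96, 21/96), yet disagree on the joint law of (M,Y): one gives P(Y=1,M=1) = 3/8 and the other P(Y=1,M=1) = 1/3. -/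
open Finset

/-- The joint law of `(M, Y, R^M, R^Y)` factorizes as
`P(m,y,r,s) = P(M=m) P(Y=y|M=m) P(R^M=r|M=m) P(R^Y=s|M=m,Y=y)`
(i.e. `R^Y` depends on both `M` and `Y`, and `R^M ⊥ (Y, R^Y) | M`). -/
def FactorizesFig3 (p : Bool × Bool × Bool × Bool → ℝ) : Prop :=
  ∃ (fM : Bool → ℝ) (fY fRM : Bool → Bool → ℝ) (fRY : Bool → Bool → Bool → ℝ),
    (∀ m, 0 ≤ fM m) ∧ (∑ m, fM m) = 1 ∧
    (∀ m y, 0 ≤ fY m y) ∧ (∀ m, (∑ y, fY m y) = 1) ∧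
    (∀ m r, 0 ≤ fRM m r) ∧ (∀ m, (∑ r, fRM m r) = 1) ∧
    (∀ m y s, 0 ≤ fRY m y s) ∧ (∀ m y, (∑ s, fRY m y s) = 1) ∧
    (∀ m y r s, p (m, y, r, s) = fM m * fY m y * fRM m r * fRY m y s)

noncomputable def pM : Bool → ℝ := fun _ => 1/2
noncomputable def pY1 : Bool → Bool → ℝ
  | true, true => 3/4 | true, false => 1/4
  | false, true => 1/2 | false, false => 1/2
noncomputable def pRM : Bool → Bool → ℝ
  | true, true => 3/4 | true, false => 1/4
  | false, true => 1/2 | false, false => 1/2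
noncomputable def pRY1 : Bool → Bool → Bool → ℝ
  | true, true, true => 2/3 | true, true, false => 1/3
  | true, false, true => 1/3 | true, false, false => 2/3
  | false, true, true => 1/2 | false, true, false => 1/2
  | false, false, true => 1/6 | false, false, false => 5/6
noncomputable def pY2 : Bool → Bool → ℝ
  | true, true => 2/3 | true, false => 1/3
  | false, true => 3/4 | false, false => 1/4
noncomputable def pRY2 : Bool → Bool → Bool → ℝ
  | true, true, true => 3/4 | true, true, false => 1/4
  | true, false, true => 1/4 | true, false, false => 3/4
  | false, true, true => 1/3 | false, true, false => 2/3
  | false, false, true => 1/3 | false, false, false => 2/3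
noncomputable def pdist : Bool × Bool × Bool × Bool → ℝ :=
  fun x => pM x.1 * pY1 x.1 x.2.1 * pRM x.1 x.2.2.1 * pRY1 x.1 x.2.1 x.2.2.2
noncomputable def qdist : Bool × Bool × Bool × Bool → ℝ :=
  fun x => pM x.1 * pY2 x.1 x.2.1 * pRM x.1 x.2.2.1 * pRY2 x.1 x.2.1 x.2.2.2

/-- Counterexample (iii): when `R^Y` depends on both `M` and `Y`, two distinct
joint distributions induce the observable probabilities
`(18/96, 6/96, 3/96, 2/96, 12/96, 3/96, 15/96, 16/96, 21/96)` yet disagree on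
the joint law of `(M, Y)`: one gives `P(Y=1, M=1) = 3/8`, the other `1/3`. -/
theorem unidentifiable_RY_depends_M_Y :
    ∃ p q : Bool × Bool × Bool × Bool → ℝ,
      FactorizesFig3 p ∧ FactorizesFig3 q ∧
      -- observables of p
      (p (true, true, true, true) = 18/96 ∧ p (false, true, true, true) = 6/96 ∧
        p (true, false, true, true) = 3/96 ∧ p (false, false, true, true) = 2/96 ∧
        (∑ m, p (m, true, false, true)) = 12/96 ∧
        (∑ m, p (m, false, false, true)) = 3/96 ∧
        (∑ y, p (true, y, true, false)) = 15/96 ∧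
        (∑ y, p (false, y, true, false)) = 16/96 ∧
        (∑ m, ∑ y, p (m, y, false, false)) = 21/96) ∧
      -- the same observables for q
      (q (true, true, true, true) = 18/96 ∧ q (false, true, true, true) = 6/96 ∧
        q (true, false, true, true) = 3/96 ∧ q (false, false, true, true) = 2/96 ∧
        (∑ m, q (m, true, false, true)) = 12/96 ∧
        (∑ m, q (m, false, false, true)) = 3/96 ∧
        (∑ y, q (true, y, true, false)) = 15/96 ∧
        (∑ y, q (false, y, true, false)) = 16/96 ∧
        (∑ m, ∑ y, q (m, y, false, false)) = 21/96) ∧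
      -- different joint laws of (M, Y)
      (∑ r, ∑ s, p (true, true, r, s)) = 3/8 ∧
      (∑ r, ∑ s, q (true, true, r, s)) = 1/3 := by
  refine ⟨pdist, qdist,
    ⟨pM, pY1, pRM, pRY1, ?_, ?_, ?_, ?_, ?_, ?_, ?_, ?_, ?_⟩,
    ⟨pM, pY2, pRM, pRY2, ?_, ?_, ?_, ?_, ?_, ?_, ?_, ?_, ?_⟩,
    ⟨?_, ?_, ?_, ?_, ?_, ?_, ?_, ?_, ?_⟩,
    ⟨?_, ?_, ?_, ?_, ?_, ?_, ?_, ?_, ?_⟩, ?_, ?_⟩ <;>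
  simp [pdist, qdist, pM, pY1, pY2, pRM, pRY1, pRY2, Bool.forall_bool,
    Fintype.sum_bool] <;> norm_num
end
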